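/- Let λ be a strict partition of n. The principal specialization Q_λ(1^t) — the value of Schur's Q-function Q_λ at x_1 = ⋯ = x_t = 1 and all other variables 0 — is, as a function of t, a polynomial in t with rational coefficients, and this polynomial is divisible by t^{srank(λ)} in ℚ[t], where srank(λ) = max(o, e + (ℓ(λ) mod 2)) with o and e the numbers of odd and even parts of λ. -/

import Mathlib

/-!
Let `M(n, r)` be the span of the power-sum products `p_π` with `π ⊢ n` and `ℓ(π) ≥ r`; these
subspaces multiply as `M(a, r) M(b, s) ⊆ M(a + b, r + s)`. Newton's identity
`k q_k = 2 Σ_{j odd} p_j q_{k-j}` puts `q_k` in the span of products of odd power sums, hence in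
`M(k, ε(k))` with `ε(k)` the least number of odd parts summing to `k` (`0`, `1` or `2`).
Feeding this through Schur's recursion, and using that `srank` is subadditive under
concatenation with `srank [a] = ε(a)` and `srank [a, b] = ε(a + b)`, gives
`Q_λ ∈ M(|λ|, srank λ)`. Since the `p_π` are linearly independent, every `π` with
`ℓ(π) < srank λ` has coefficient `0` in `Q_λ`, so `Σ_π c_π t^{ℓ(π)}` is divisible by
`t^{srank λ}`.
-/

open scoped Classical

/-- A strict partition of `n`: a strictly decreasing list of positive integers summing to `n`. -/
def IsStrictPartition (n : ℕ) (l : List ℕ) : Prop :=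
  l.Pairwise (· > ·) ∧ (∀ x ∈ l, 0 < x) ∧ l.sum = n

/-- The `i`-th part of `l` (1-indexed); parts beyond the length are `0`. -/
def partAt (l : List ℕ) (i : ℕ) : ℕ := l.getD (i - 1) 0

/-- The monomial symmetric function `m_μ`, as a formal power series in the variables
`x_0, x_1, x_2, …`: the coefficient of a monomial is `1` exactly when the multiset of its
nonzero exponents is `μ`. -/
noncomputable def mSym (μ : Multiset ℕ) : MvPowerSeries ℕ ℚ :=
  fun d => if d.support.val.map d = μ then 1 else 0

/-- The power sum symmetric function `p_k = Σ_i x_i^k`. -/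
noncomputable def pFun (k : ℕ) : MvPowerSeries ℕ ℚ :=
  fun d => if ∃ i : ℕ, d = Finsupp.single i k then 1 else 0

/-- `q_k = Σ_{μ ⊢ k} 2^{ℓ(μ)} m_μ`. -/
noncomputable def qFun (k : ℕ) : MvPowerSeries ℕ ℚ :=
  ∑ μ : Nat.Partition k,
    (MvPowerSeries.C : ℚ →+* MvPowerSeries ℕ ℚ) ((2 : ℚ) ^ (Multiset.card μ.parts)) * mSym μ.parts

/-- `p_π = p_{π_1} p_{π_2} ⋯` for a partition `π` of `n`. -/
noncomputable def pProd {n : ℕ} (π : Nat.Partition n) : MvPowerSeries ℕ ℚ :=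
  (π.parts.map pFun).prod

open MvPowerSeries Finset

def exponents (d : ℕ →₀ ℕ) : Multiset ℕ := d.support.val.map d

lemma card_exponents (d : ℕ →₀ ℕ) : Multiset.card (exponents d) = #d.support := by
  simp [exponents]

lemma pos_of_mem_exponents {d : ℕ →₀ ℕ} {x : ℕ} (hx : x ∈ exponents d) : 0 < x := by
  obtain ⟨i, hi, rfl⟩ := Multiset.mem_map.mp hx
  exact Nat.pos_of_ne_zero (Finsupp.mem_support_iff.mp hi)

lemma sum_exponents (d : ℕ →₀ ℕ) : (exponents d).sum = d.degree := rfl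

lemma support_single_add {i k : ℕ} (hk : k ≠ 0) (f : ℕ →₀ ℕ) :
    (Finsupp.single i k + f).support = insert i f.support := by
  ext x
  rcases eq_or_ne x i with rfl | hxi <;> simp [*]

lemma exponents_single_add {i k : ℕ} (hk : k ≠ 0) {f : ℕ →₀ ℕ} (hi : i ∉ f.support) :
    exponents (Finsupp.single i k + f) = k ::ₘ exponents f := by
  rw [exponents, support_single_add hk, insert_val_of_notMem hi, Multiset.map_cons,
    exponents]
  congr 1
  · simp [Finsupp.notMem_support_iff.mp hi]
  · refine Multiset.map_congr rfl fun x hx => ?_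
    have hxi : i ≠ x := by rintro rfl; exact hi hx
    simp [hxi]

lemma coeff_qFun (k : ℕ) (d : ℕ →₀ ℕ) :
    coeff d (qFun k) = if d.degree = k then 2 ^ #d.support else 0 := by
  have coeff_mSym (μ : Multiset ℕ) : coeff d (mSym μ) = if exponents d = μ then 1 else 0 := rfl
  simp only [qFun, map_sum, coeff_C_mul, coeff_mSym, mul_ite, mul_one, mul_zero]
  split_ifs with hd
  · let μ : Nat.Partition k := ⟨exponents d, pos_of_mem_exponents, hd⟩
    rw [sum_eq_single_of_mem μ (mem_univ _) fun ν _ hν =>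
      if_neg fun h => hν (Nat.Partition.ext h.symm), if_pos rfl, card_exponents]
  · exact sum_eq_zero fun μ _ =>
      if_neg fun h => hd (by rw [← sum_exponents, h, μ.parts_sum])

lemma qFun_zero : qFun 0 = 1 := by
  ext d
  rw [coeff_qFun, coeff_one]
  simp only [Finsupp.degree_eq_zero_iff]
  split_ifs with hd <;> simp [hd]

lemma coeff_pFun (k : ℕ) (d : ℕ →₀ ℕ) :
    coeff d (pFun k) = if ∃ i, d = Finsupp.single i k then 1 else 0 :=
  rfl

lemma coeff_pFun_mul {j : ℕ} (hj : j ≠ 0) (F : MvPowerSeries ℕ ℚ) (d : ℕ →₀ ℕ) :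
    coeff d (pFun j * F) =
      ∑ i ∈ d.support with j ≤ d i, coeff (d - Finsupp.single i j) F := by
  rw [coeff_mul]
  symm
  refine sum_of_injOn (fun i => (Finsupp.single i j, d - Finsupp.single i j)) ?_ ?_ ?_ ?_
  · exact fun a _ b _ hab => Finsupp.single_left_injective hj (congrArg Prod.fst hab)
  · intro i hi
    simp only [coe_filter, Set.mem_ofPred_eq] at hi
    simp [add_tsub_cancel_of_le, Finsupp.single_le_iff, hi.2]
  · rintro ⟨e, f⟩ hef hnot
    rw [HasAntidiagonal.mem_antidiagonal] at hef
    rw [coeff_pFun, if_neg, zero_mul]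
    rintro ⟨i, rfl⟩
    refine hnot ⟨i, ?_, ?_⟩
    · have hdi : d i = j + f i := by simp [← hef]
      simp only [coe_filter, Set.mem_ofPred_eq, Finsupp.mem_support_iff]
      omega
    · simp [← hef]
  · intro i _
    rw [coeff_pFun, if_pos ⟨i, rfl⟩, one_mul]

lemma card_support_tsub_single {d : ℕ →₀ ℕ} {i j : ℕ} (hj : j ≠ 0) (hji : j ≤ d i) :
    #(d - Finsupp.single i j).support = if j = d i then #d.support - 1 else #d.support := by
  have hi : i ∈ d.support := Finsupp.mem_support_iff.mpr (by omega)
  split_ifs with h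
  · rw [← card_erase_of_mem hi]
    congr 1
    ext x
    rcases eq_or_ne x i with rfl | hxi <;> simp [*]
  · congr 1
    ext x
    rcases eq_or_ne x i with rfl | hxi <;> simp [*]
    omega

lemma two_mul_card_odd_Icc (m : ℕ) : 2 * #{j ∈ Icc 1 m | Odd j} = m + m % 2 := by
  induction m with
  | zero => rfl
  | succ m ih =>
    rw [← insert_Icc_right_eq_Icc_add_one (by omega), filter_insert]
    have hm : m + 1 ∉ Icc 1 m := by simp
    split_ifs with h
    · rw [card_insert_of_notMem (by simp [hm])]
      rw [Nat.odd_iff] at h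
      omega
    · rw [Nat.odd_iff] at h
      omega

lemma sum_odd_Icc_ite (m : ℕ) (hm : m ≠ 0) :
    ∑ j ∈ Icc 1 m with Odd j, (if j = m then (1 : ℚ) else 2) = m := by
  have hcount := two_mul_card_odd_Icc m
  have hterm (j : ℕ) : (if j = m then (1 : ℚ) else 2) = 2 - if j = m then 1 else 0 := by
    split_ifs <;> norm_num
  simp only [hterm, sum_sub_distrib, sum_const, nsmul_eq_mul, sum_ite_eq', mem_filter, mem_Icc]
  rcases Nat.even_or_odd m with h | h
  · have hc : (2 * #{j ∈ Icc 1 m | Odd j} : ℚ) = m := by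
      exact_mod_cast (by rw [Nat.even_iff.mp h] at hcount; omega)
    simp [Nat.not_odd_iff_even.mpr h]
    linarith
  · have hc : (2 * #{j ∈ Icc 1 m | Odd j} : ℚ) = m + 1 := by
      exact_mod_cast (by rw [Nat.odd_iff.mp h] at hcount; omega)
    simp [h, Nat.one_le_iff_ne_zero.mpr hm]
    linarith

lemma degree_tsub_single {d : ℕ →₀ ℕ} {i j : ℕ} (hji : j ≤ d i) :
    (d - Finsupp.single i j).degree = d.degree - j := by
  have hle : Finsupp.single i j ≤ d := Finsupp.single_le_iff.mpr hji
  conv_rhs => rw [← add_tsub_cancel_of_le hle, map_add, Finsupp.degree_single]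
  omega

lemma coeff_pFun_mul_qFun {j k : ℕ} (hj : j ∈ Icc 1 k) (d : ℕ →₀ ℕ) :
    coeff d (pFun j * qFun (k - j)) = ∑ i ∈ d.support with j ≤ d i,
      if d.degree = k then (2 : ℚ) ^ (if j = d i then #d.support - 1 else #d.support) else 0 := by
  rw [mem_Icc] at hj
  rw [coeff_pFun_mul (by omega)]
  refine sum_congr rfl fun i hi => ?_
  have hji := (mem_filter.mp hi).2
  have := Finsupp.le_degree i d
  rw [coeff_qFun, degree_tsub_single hji, card_support_tsub_single (by omega) hji]
  congr 1
  exact propext (by omega)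

/-- Newton's identity for the `q_k`: the logarithmic derivative of
`Σ q_k t^k = ∏_i (1 + x_i t) / (1 - x_i t)` is `2 Σ_{j odd} p_j t^{j-1}`. -/
theorem natCast_smul_qFun (k : ℕ) :
    (k : ℚ) • qFun k = (2 : ℚ) • ∑ j ∈ Icc 1 k with Odd j, pFun j * qFun (k - j) := by
  ext d
  set s := #d.support
  simp only [map_smul, map_sum, smul_eq_mul, coeff_qFun]
  rw [sum_congr rfl fun j hj => coeff_pFun_mul_qFun (mem_filter.mp hj).1 d]
  split_ifs with hd
  swap
  · simp
  rw [sum_comm' (t' := d.support) (s' := fun i => {j ∈ Icc 1 (d i) | Odd j}), mul_sum]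
  · have hpart (i : ℕ) (hi : i ∈ d.support) :
        2 * ∑ j ∈ Icc 1 (d i) with Odd j, (2 : ℚ) ^ (if j = d i then s - 1 else s) =
          2 ^ s * d i := by
      have hs : s ≠ 0 := card_ne_zero_of_mem hi
      rw [← sum_odd_Icc_ite (d i) (Finsupp.mem_support_iff.mp hi), mul_sum, mul_sum]
      refine sum_congr rfl fun j _ => ?_
      split_ifs
      · rw [← pow_succ', Nat.sub_add_cancel (Nat.one_le_iff_ne_zero.mpr hs), mul_one]
      · ring
    rw [sum_congr rfl hpart, ← mul_sum, ← Nat.cast_sum, ← Finsupp.degree_apply, hd]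
    ring
  · intro j i
    have := Finsupp.le_degree i d
    simp only [mem_filter, mem_Icc]
    constructor
    · rintro ⟨⟨⟨h1, -⟩, hodd⟩, hi, hji⟩
      exact ⟨⟨⟨h1, hji⟩, hodd⟩, hi⟩
    · rintro ⟨⟨⟨h1, hji⟩, hodd⟩, hi⟩
      exact ⟨⟨⟨h1, by omega⟩, hodd⟩, hi, hji⟩

noncomputable def powerSumProd (S : Multiset ℕ) : MvPowerSeries ℕ ℚ := (S.map pFun).prod

@[simp]
lemma powerSumProd_zero : powerSumProd 0 = 1 := rfl

@[simp]
lemma powerSumProd_cons (k : ℕ) (S : Multiset ℕ) :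
    powerSumProd (k ::ₘ S) = pFun k * powerSumProd S := by
  simp [powerSumProd]

lemma powerSumProd_add (S T : Multiset ℕ) :
    powerSumProd (S + T) = powerSumProd S * powerSumProd T := by
  simp [powerSumProd]

lemma coeff_powerSumProd_nonneg (S : Multiset ℕ) (d : ℕ →₀ ℕ) :
    0 ≤ coeff d (powerSumProd S) := by
  induction S using Multiset.induction_on generalizing d with
  | empty => rw [powerSumProd_zero, coeff_one]; positivity
  | cons k S ih =>
    rw [powerSumProd_cons, coeff_mul]
    refine sum_nonneg fun p _ => mul_nonneg ?_ (ih p.2)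
    rw [coeff_pFun]
    positivity

lemma card_support_le_of_coeff_powerSumProd_ne_zero {S : Multiset ℕ} (hS : ∀ x ∈ S, 0 < x)
    {d : ℕ →₀ ℕ} (hd : coeff d (powerSumProd S) ≠ 0) :
    #d.support ≤ Multiset.card S ∧ (#d.support = Multiset.card S → exponents d = S) := by
  induction S using Multiset.induction_on generalizing d with
  | empty =>
    rw [powerSumProd_zero, coeff_one] at hd
    obtain rfl : d = 0 := by by_contra h; exact hd (if_neg h)
    simp [exponents]
  | cons k S ih =>
    have hk : k ≠ 0 := (hS k (Multiset.mem_cons_self k S)).ne'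
    rw [powerSumProd_cons, coeff_pFun_mul hk] at hd
    obtain ⟨i, hi, hd'⟩ := exists_ne_zero_of_sum_ne_zero hd
    obtain ⟨hi, hki⟩ := mem_filter.mp hi
    obtain ⟨hle, heq⟩ := ih (fun x hx => hS x (Multiset.mem_cons_of_mem hx)) hd'
    rw [card_support_tsub_single hk hki] at hle heq
    have hpos : 0 < #d.support := card_pos.mpr ⟨i, hi⟩
    rw [Multiset.card_cons]
    refine ⟨by split_ifs at hle <;> omega, fun hcard => ?_⟩
    have hki' : k = d i := by by_contra h; rw [if_neg h] at hle; omega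
    rw [if_pos hki'] at heq
    have hnot : i ∉ (d - Finsupp.single i k).support := by simp [hki']
    rw [← add_tsub_cancel_of_le (Finsupp.single_le_iff.mpr hki), exponents_single_add hk hnot,
      heq (by omega)]

lemma exists_coeff_powerSumProd_pos {S : Multiset ℕ} (hS : ∀ x ∈ S, 0 < x) :
    ∃ d : ℕ →₀ ℕ, 0 < coeff d (powerSumProd S) ∧ exponents d = S := by
  induction S using Multiset.induction_on with
  | empty => exact ⟨0, by simp, rfl⟩
  | cons k S ih =>
    have hk : k ≠ 0 := (hS k (Multiset.mem_cons_self k S)).ne'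
    obtain ⟨d, hd, hdS⟩ := ih fun x hx => hS x (Multiset.mem_cons_of_mem hx)
    obtain ⟨i, hi⟩ := Infinite.exists_notMem_finset d.support
    refine ⟨Finsupp.single i k + d, ?_, by rw [exponents_single_add hk hi, hdS]⟩
    rw [powerSumProd_cons, coeff_pFun_mul hk]
    refine lt_of_lt_of_le ?_ (single_le_sum (fun j _ => coeff_powerSumProd_nonneg S _)
      (mem_filter.mpr ⟨by simp [support_single_add hk], by simp⟩ : i ∈ _))
    simpa using hd

theorem linearIndependent_pProd (n : ℕ) : LinearIndependent ℚ (pProd (n := n)) := by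
  -- a nonzero `g π₀` with `ℓ(π₀)` maximal is read off at a monomial in `ℓ(π₀)` distinct
  -- variables with exponents `π₀.parts`, which occurs in no other `p_π` with `g π ≠ 0`
  rw [Fintype.linearIndependent_iff]
  intro g hg
  by_contra! hne
  obtain ⟨π₀, hπ₀, hmax⟩ := exists_max_image {π | g π ≠ 0} (fun π => Multiset.card π.parts)
    (by simpa [Finset.Nonempty] using hne)
  obtain ⟨d, hd, hdπ₀⟩ := exists_coeff_powerSumProd_pos fun x hx => π₀.parts_pos hx
  have hcoeff := congrArg (coeff d) hg
  rw [map_sum, map_zero, sum_eq_single π₀] at hcoeff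
  · rw [map_smul, smul_eq_mul] at hcoeff
    exact (mem_filter.mp hπ₀).2 ((mul_eq_zero.mp hcoeff).resolve_right (ne_of_gt hd))
  · intro π _ hπ
    rw [map_smul, smul_eq_mul, mul_eq_zero, or_iff_not_imp_left]
    intro hgπ
    by_contra hdπ
    obtain ⟨hle, heq⟩ :=
      card_support_le_of_coeff_powerSumProd_ne_zero (fun x hx => π.parts_pos hx) hdπ
    have := hmax π (mem_filter.mpr ⟨mem_univ π, hgπ⟩)
    rw [← card_exponents, hdπ₀] at hle heq
    exact hπ (Nat.Partition.ext (heq (le_antisymm hle this)).symm)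
  · simp

theorem LinearIndependent.eq_zero_of_sum_smul_mem_span_image {ι R M : Type*} [Fintype ι]
    [Ring R] [AddCommGroup M] [Module R M] {v : ι → M} (hv : LinearIndependent R v)
    {s : Set ι} {c : ι → R} (h : ∑ i, c i • v i ∈ Submodule.span R (v '' s)) {i : ι}
    (hi : i ∉ s) : c i = 0 := by
  obtain ⟨l, hl, hlc⟩ := (Finsupp.mem_span_image_iff_linearCombination R).mp h
  have hlc' : l = Finsupp.equivFunOnFinite.symm c := hv.finsuppLinearCombination_injective <| by
    rw [hlc, Finsupp.linearCombination_apply, Finsupp.sum_fintype _ _ (by simp)]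
    simp
  have : l i = 0 := Finsupp.notMem_support_iff.mp fun h => hi (hl h)
  simpa [hlc'] using this

noncomputable def pProdSpan (n r : ℕ) : Submodule ℚ (MvPowerSeries ℕ ℚ) :=
  Submodule.span ℚ (pProd '' {π : Nat.Partition n | r ≤ Multiset.card π.parts})

lemma powerSumProd_mem_pProdSpan {S : Multiset ℕ} (hS : ∀ x ∈ S, 0 < x) {n r : ℕ}
    (hn : S.sum = n) (hr : r ≤ Multiset.card S) : powerSumProd S ∈ pProdSpan n r :=
  Submodule.subset_span ⟨⟨S, hS _, hn⟩, hr, rfl⟩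

lemma pProdSpan_anti (n : ℕ) {r r' : ℕ} (h : r' ≤ r) : pProdSpan n r ≤ pProdSpan n r' :=
  Submodule.span_mono <| Set.image_mono fun _ hπ => le_trans h hπ

lemma mul_mem_pProdSpan {a b r s : ℕ} {F G : MvPowerSeries ℕ ℚ} (hF : F ∈ pProdSpan a r)
    (hG : G ∈ pProdSpan b s) : F * G ∈ pProdSpan (a + b) (r + s) := by
  have hle : pProdSpan a r * pProdSpan b s ≤ pProdSpan (a + b) (r + s) := by
    rw [pProdSpan, pProdSpan, Submodule.span_mul_span, Submodule.span_le]
    rintro _ ⟨_, ⟨π, hπ, rfl⟩, _, ⟨σ, hσ, rfl⟩, rfl⟩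
    change powerSumProd π.parts * powerSumProd σ.parts ∈ pProdSpan (a + b) (r + s)
    rw [← powerSumProd_add]
    refine powerSumProd_mem_pProdSpan (fun x hx => ?_) (by simp [π.parts_sum, σ.parts_sum]) ?_
    · rcases Multiset.mem_add.mp hx with hx | hx
      exacts [π.parts_pos hx, σ.parts_pos hx]
    · simp only [Set.mem_ofPred_eq] at hπ hσ
      simp only [Multiset.card_add]
      omega
  exact hle (Submodule.mul_mem_mul hF hG)

lemma C_mul_mem_pProdSpan {n r : ℕ} (c : ℚ) {F : MvPowerSeries ℕ ℚ} (hF : F ∈ pProdSpan n r) :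
    C c * F ∈ pProdSpan n r := by
  rw [← smul_eq_C_mul]
  exact Submodule.smul_mem _ c hF

lemma eq_zero_of_sum_mem_pProdSpan {n r : ℕ} {c : Nat.Partition n → ℚ}
    (h : ∑ π, C (c π) * pProd π ∈ pProdSpan n r) {π : Nat.Partition n}
    (hπ : Multiset.card π.parts < r) : c π = 0 := by
  simp only [← smul_eq_C_mul] at h
  exact (linearIndependent_pProd n).eq_zero_of_sum_smul_mem_span_image h (not_le.mpr hπ)

def minOddParts (k : ℕ) : ℕ := if k = 0 then 0 else if Odd k then 1 else 2

lemma minOddParts_of_odd {k : ℕ} (hk : Odd k) : minOddParts k = 1 := by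
  simp [minOddParts, hk, hk.pos.ne']

lemma minOddParts_add_le (a b : ℕ) : minOddParts (a + b) ≤ minOddParts a + minOddParts b := by
  simp only [minOddParts, Nat.odd_iff]
  split_ifs <;> omega

lemma pFun_mem_pProdSpan {j : ℕ} (hj : 0 < j) : pFun j ∈ pProdSpan j 1 := by
  simpa [powerSumProd] using
    powerSumProd_mem_pProdSpan (S := {j}) (by simpa using hj) (by simp) (r := 1) (by simp)

theorem qFun_mem_pProdSpan (k : ℕ) : qFun k ∈ pProdSpan k (minOddParts k) := by
  induction k using Nat.strong_induction_on with
  | _ k ih =>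
  rcases Nat.eq_zero_or_pos k with rfl | hk
  · rw [qFun_zero, ← powerSumProd_zero]
    exact powerSumProd_mem_pProdSpan (by simp) rfl (Nat.zero_le _)
  have hq : qFun k = (k : ℚ)⁻¹ • (2 : ℚ) • ∑ j ∈ Icc 1 k with Odd j, pFun j * qFun (k - j) := by
    rw [← natCast_smul_qFun, inv_smul_smul₀ (by positivity)]
  rw [hq]
  refine Submodule.smul_mem _ _ (Submodule.smul_mem _ _ (Submodule.sum_mem _ fun j hj => ?_))
  obtain ⟨hj, hodd⟩ := mem_filter.mp hj
  rw [mem_Icc] at hj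
  have hmem := mul_mem_pProdSpan (pFun_mem_pProdSpan hodd.pos) (ih (k - j) (by omega))
  have hle := minOddParts_add_le j (k - j)
  rw [Nat.add_sub_cancel' hj.2, minOddParts_of_odd hodd] at hle
  rw [Nat.add_sub_cancel' hj.2] at hmem
  exact pProdSpan_anti k hle hmem

def srank (l : List ℕ) : ℕ :=
  max (l.countP (fun x => decide (Odd x)))
    (l.countP (fun x => decide (Even x)) + l.length % 2)

lemma srank_perm {l₁ l₂ : List ℕ} (h : l₁.Perm l₂) : srank l₁ = srank l₂ := by
  simp only [srank, h.countP_eq, h.length_eq]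

lemma srank_append_le (l₁ l₂ : List ℕ) : srank (l₁ ++ l₂) ≤ srank l₁ + srank l₂ := by
  simp only [srank, List.countP_append, List.length_append]
  omega

lemma srank_singleton {a : ℕ} (ha : 0 < a) : srank [a] = minOddParts a := by
  simp only [srank, minOddParts, List.countP_cons, List.countP_nil, List.length_cons,
    List.length_nil, decide_eq_true_eq, ← Nat.not_odd_iff_even]
  split_ifs <;> omega

lemma srank_pair {a b : ℕ} (hab : 0 < a + b) : srank [a, b] = minOddParts (a + b) := by
  simp only [srank, minOddParts, List.countP_cons, List.countP_nil, List.length_cons,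
    List.length_nil, decide_eq_true_eq, Nat.odd_iff, Nat.even_iff]
  split_ifs <;> omega

lemma mul_mem_pProdSpan_srank {l l₁ l₂ : List ℕ} (hl : l.Perm (l₁ ++ l₂))
    {F G : MvPowerSeries ℕ ℚ} (hF : F ∈ pProdSpan l₁.sum (srank l₁))
    (hG : G ∈ pProdSpan l₂.sum (srank l₂)) : F * G ∈ pProdSpan l.sum (srank l) := by
  have hmem := mul_mem_pProdSpan hF hG
  rw [← List.sum_append, ← hl.sum_eq] at hmem
  exact pProdSpan_anti _ ((srank_perm hl).trans_le (srank_append_le _ _)) hmem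

structure SatisfiesSchurRecursion (Q : List ℕ → MvPowerSeries ℕ ℚ) : Prop where
  singleton : ∀ a : ℕ, 0 < a → Q [a] = qFun a
  pair : ∀ a b : ℕ, 0 < b → b < a →
    Q [a, b] = qFun a * qFun b +
      2 * ∑ m ∈ Icc 1 b, C ((-1 : ℚ) ^ m) * (qFun (a + m) * qFun (b - m))
  odd : ∀ l : List ℕ, l.Pairwise (· > ·) → (∀ x ∈ l, 0 < x) → Odd l.length → 3 ≤ l.length →
    Q l = ∑ i ∈ Icc 1 l.length,
      C ((-1 : ℚ) ^ (i + 1)) * (qFun (partAt l i) * Q (l.eraseIdx (i - 1)))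
  even : ∀ l : List ℕ, l.Pairwise (· > ·) → (∀ x ∈ l, 0 < x) → Even l.length → 4 ≤ l.length →
    Q l = ∑ i ∈ Icc 2 l.length,
      C ((-1 : ℚ) ^ i) * (Q [partAt l 1, partAt l i] * Q ((l.eraseIdx (i - 1)).tail))

namespace SatisfiesSchurRecursion

variable {Q : List ℕ → MvPowerSeries ℕ ℚ}

lemma pair_mem_pProdSpan (hQ : SatisfiesSchurRecursion Q) {a b : ℕ} (hb : 0 < b) (hab : b < a) :
    Q [a, b] ∈ pProdSpan (a + b) (minOddParts (a + b)) := by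
  have hprod {x y : ℕ} (hxy : x + y = a + b) :
      qFun x * qFun y ∈ pProdSpan (a + b) (minOddParts (a + b)) := by
    have hmem := mul_mem_pProdSpan (qFun_mem_pProdSpan x) (qFun_mem_pProdSpan y)
    rw [hxy] at hmem
    exact pProdSpan_anti _ (hxy ▸ minOddParts_add_le x y) hmem
  rw [hQ.pair a b hb hab, two_mul]
  have hsum := Submodule.sum_mem _ fun m (hm : m ∈ Icc 1 b) =>
    C_mul_mem_pProdSpan ((-1 : ℚ) ^ m)
      (hprod (x := a + m) (y := b - m) (by rw [mem_Icc] at hm; omega))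
  exact add_mem (hprod rfl) (add_mem hsum hsum)

lemma mem_pProdSpan_of_odd (hQ : SatisfiesSchurRecursion Q) {l : List ℕ}
    (hsort : l.Pairwise (· > ·)) (hpos : ∀ x ∈ l, 0 < x) (hodd : Odd l.length)
    (hlen : 3 ≤ l.length)
    (ih : ∀ l' : List ℕ, l'.Sublist l → l' ≠ [] → l'.length < l.length →
      Q l' ∈ pProdSpan l'.sum (srank l')) :
    Q l ∈ pProdSpan l.sum (srank l) := by
  rw [hQ.odd l hsort hpos hodd hlen]
  refine Submodule.sum_mem _ fun i hi => C_mul_mem_pProdSpan _ ?_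
  rw [mem_Icc] at hi
  have hm : i - 1 < l.length := by omega
  have hpart : partAt l i = l[i - 1] := List.getD_eq_getElem _ _ hm
  have hsub : [l[i - 1]].Sublist l := List.singleton_sublist.mpr (List.getElem_mem hm)
  have hrest : (l.eraseIdx (i - 1)).length = l.length - 1 := List.length_eraseIdx_of_lt hm
  rw [hpart, ← hQ.singleton _ (hpos _ (List.getElem_mem hm))]
  refine mul_mem_pProdSpan_srank (List.getElem_cons_eraseIdx_perm hm).symm
    (ih _ hsub (List.cons_ne_nil _ _) (by rw [List.length_singleton]; omega))
    (ih _ (List.eraseIdx_sublist _ _) ?_ (by omega))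
  rw [← List.length_pos_iff_ne_nil]
  omega

lemma mem_pProdSpan_of_even (hQ : SatisfiesSchurRecursion Q) {a : ℕ} {T : List ℕ}
    (hsort : (a :: T).Pairwise (· > ·)) (hpos : ∀ x ∈ a :: T, 0 < x)
    (heven : Even (a :: T).length) (hlen : 4 ≤ (a :: T).length)
    (ih : ∀ l' : List ℕ, l'.Sublist (a :: T) → l' ≠ [] → l'.length < (a :: T).length →
      Q l' ∈ pProdSpan l'.sum (srank l')) :
    Q (a :: T) ∈ pProdSpan (a :: T).sum (srank (a :: T)) := by
  rw [hQ.even _ hsort hpos heven hlen]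
  refine Submodule.sum_mem _ fun i hi => C_mul_mem_pProdSpan _ ?_
  rw [mem_Icc, List.length_cons] at hi
  obtain ⟨j, rfl⟩ : ∃ j, i = j + 2 := ⟨i - 2, by omega⟩
  have hj : j < T.length := by omega
  have hpart : partAt (a :: T) (j + 2) = T[j] := List.getD_eq_getElem _ _ hj
  have hsub : [a, T[j]].Sublist (a :: T) :=
    (List.singleton_sublist.mpr (List.getElem_mem hj)).cons_cons a
  have hrest : (T.eraseIdx j).length = T.length - 1 := List.length_eraseIdx_of_lt hj
  have hperm : (a :: T).Perm ([a, T[j]] ++ T.eraseIdx j) :=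
    ((List.getElem_cons_eraseIdx_perm hj).symm.cons a)
  rw [List.length_cons] at hlen
  rw [hpart]
  -- the second factor `Q ((a :: T).eraseIdx (j + 1)).tail` reduces to `Q (T.eraseIdx j)`
  refine mul_mem_pProdSpan_srank hperm
    (ih _ hsub (List.cons_ne_nil _ _) (by simp only [List.length_cons, List.length_nil]; omega))
    (ih _ ((List.eraseIdx_sublist _ _).cons a) ?_ (by rw [List.length_cons]; omega))
  rw [← List.length_pos_iff_ne_nil]
  omega

theorem mem_pProdSpan_srank (hQ : SatisfiesSchurRecursion Q) {l : List ℕ} (hne : l ≠ [])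
    (hsort : l.Pairwise (· > ·)) (hpos : ∀ x ∈ l, 0 < x) :
    Q l ∈ pProdSpan l.sum (srank l) := by
  induction hN : l.length using Nat.strong_induction_on generalizing l with
  | _ N ih =>
  subst hN
  have ih' (l' : List ℕ) (hsub : l'.Sublist l) (hne' : l' ≠ []) (hlt : l'.length < l.length) :
      Q l' ∈ pProdSpan l'.sum (srank l') :=
    ih _ hlt hne' (hsort.sublist hsub) (fun x hx => hpos x (hsub.subset hx)) rfl
  rcases l with _ | ⟨a, _ | ⟨b, _ | ⟨c, t⟩⟩⟩
  · exact absurd rfl hne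
  · have ha : 0 < a := hpos a (List.mem_singleton_self a)
    rw [hQ.singleton a ha, List.sum_singleton, srank_singleton ha]
    exact qFun_mem_pProdSpan a
  · have hb : 0 < b := hpos b (by simp)
    have hab : b < a := List.rel_of_pairwise_cons hsort (List.mem_singleton_self b)
    rw [List.sum_pair, srank_pair (by omega)]
    exact hQ.pair_mem_pProdSpan hb hab
  · rcases Nat.even_or_odd (a :: b :: c :: t).length with h | h
    · have h4 : 4 ≤ (a :: b :: c :: t).length := by
        rcases h with ⟨k, hk⟩
        simp only [List.length_cons] at hk ⊢
        omega
      exact hQ.mem_pProdSpan_of_even hsort hpos h h4 ih'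
    · exact hQ.mem_pProdSpan_of_odd hsort hpos h (by simp) ih'

end SatisfiesSchurRecursion

/-- Let `Q` satisfy Schur's inductive definition of the `Q`-functions (on strict
partitions, written as strictly decreasing lists of positive integers), and write
`Q_λ = Σ_π c_π p_π` over partitions `π` of `n`.  Since `p_π(1^t) = t^{ℓ(π)}`, the
principal specialization `Q_λ(1^t) = Σ_π c_π t^{ℓ(π)}` is a polynomial in `t` with
rational coefficients, and this polynomial is divisible by `t^{srank(λ)}` in `ℚ[t]`,
where `srank(λ) = max(o, e + (ℓ(λ) mod 2))`. -/
theorem qschur_principal_specialization_divisible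
    (Q : List ℕ → MvPowerSeries ℕ ℚ)
    (hQ1 : ∀ a : ℕ, 0 < a → Q [a] = qFun a)
    (hQ2 : ∀ a b : ℕ, 0 < b → b < a →
      Q [a, b] = qFun a * qFun b +
        2 * ∑ m ∈ Finset.Icc 1 b,
          (MvPowerSeries.C : ℚ →+* MvPowerSeries ℕ ℚ) ((-1 : ℚ) ^ m) * (qFun (a + m) * qFun (b - m)))
    (hQodd : ∀ l : List ℕ, l.Pairwise (· > ·) → (∀ x ∈ l, 0 < x) →
      Odd l.length → 3 ≤ l.length →
      Q l = ∑ i ∈ Finset.Icc 1 l.length,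
        (MvPowerSeries.C : ℚ →+* MvPowerSeries ℕ ℚ) ((-1 : ℚ) ^ (i + 1)) *
          (qFun (partAt l i) * Q (l.eraseIdx (i - 1))))
    (hQeven : ∀ l : List ℕ, l.Pairwise (· > ·) → (∀ x ∈ l, 0 < x) →
      Even l.length → 4 ≤ l.length →
      Q l = ∑ i ∈ Finset.Icc 2 l.length,
        (MvPowerSeries.C : ℚ →+* MvPowerSeries ℕ ℚ) ((-1 : ℚ) ^ i) *
          (Q [partAt l 1, partAt l i] * Q ((l.eraseIdx (i - 1)).tail)))
    (n : ℕ) (l : List ℕ) (hl : IsStrictPartition n l)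
    (c : Nat.Partition n → ℚ)
    (hc : Q l = ∑ π : Nat.Partition n, (MvPowerSeries.C : ℚ →+* MvPowerSeries ℕ ℚ) (c π) * pProd π) :
    ∃ P : Polynomial ℚ,
      Polynomial.X ^ (max (l.countP (fun x => decide (Odd x)))
          (l.countP (fun x => decide (Even x)) + l.length % 2)) ∣ P ∧
      ∀ t : ℕ, P.eval (t : ℚ) =
        ∑ π : Nat.Partition n, c π * (t : ℚ) ^ (Multiset.card π.parts) := by
  obtain ⟨hsort, hpos, hsum⟩ := hl
  have hQ : SatisfiesSchurRecursion Q := ⟨hQ1, hQ2, hQodd, hQeven⟩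
  have hvanish (π : Nat.Partition n) (hπ : Multiset.card π.parts < srank l) : c π = 0 := by
    rcases eq_or_ne l [] with rfl | hne
    · simp [srank] at hπ
    have hmem := hQ.mem_pProdSpan_srank hne hsort hpos
    rw [hsum, hc] at hmem
    exact eq_zero_of_sum_mem_pProdSpan hmem hπ
  refine ⟨∑ π, Polynomial.C (c π) * Polynomial.X ^ Multiset.card π.parts, ?_,
    fun t => by simp [Polynomial.eval_finsetSum]⟩
  refine dvd_sum fun π _ => ?_
  change Polynomial.X ^ srank l ∣ _
  by_cases hπ : Multiset.card π.parts < srank l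
  · simp [hvanish π hπ]
  · exact (pow_dvd_pow _ (not_lt.mp hπ)).mul_left _
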